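/- Let $n \geq 1$, $d_1 < \dots < d_n$ positive integers, $a_i \neq 0$, and define $A_{-k}(F_1,\dots,F_n)(x) := 2^{-k}\int_0^{2^k}\prod_{i=1}^n F_i(x_1,\dots,x_i - a_it^{d_i},\dots,x_n)\,dt$ for functions $F_i$ on $\mathbb{R}^n$. Assume there exist $c > 0$ and $C$ such that for all $k \geq 0$ and $\delta \in (0,1)$: whenever some $\widehat{F_j}$ vanishes on $\{|\xi_j| \leq 2^{-kd_j}\delta^{-1}\}$, one has $\|A_{-k}(F_1,\dots,F_n)\|_{L^1(\mathbb{R}^n)} \leq C(\delta^c + 2^{-kc})\prod_i\|F_i\|_{L^n(\mathbb{R}^n)}$. Then there exist $c' > 0$ and $C'$ such that for ALL $k \in \mathbb{Z}$ and all $\delta \in (0,1)$: whenever some $\widehat{F_j}$ vanishes on $\{|\xi_j| \leq 2^{-kd_j}\delta^{-1}\}$, one has $\|A_{-k}(F_1,\dots,F_n)\|_{L^1(\mathbb{R}^n)} \leq C'\delta^{c'}\prod_i\|F_i\|_{L^n(\mathbb{R}^n)}$. -/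

import Mathlib

open MeasureTheory FourierTransform
open scoped ENNReal

/-- The averaging operator
`A_{-k}(F_1,…,F_n)(x) = 2^{-k} ∫_0^{2^k} ∏ᵢ Fᵢ(x_1,…,x_i - aᵢ t^{dᵢ},…,x_n) dt`
on functions on `ℝⁿ`. -/
noncomputable def avgOpE (n : ℕ) (d : Fin n → ℕ) (a : Fin n → ℝ) (k : ℤ)
    (F : Fin n → EuclideanSpace ℝ (Fin n) → ℂ) : EuclideanSpace ℝ (Fin n) → ℂ :=
  fun x => ((2 : ℝ) ^ (-k : ℤ) : ℝ) •
    ∫ t in Set.Ioc (0 : ℝ) ((2 : ℝ) ^ (k : ℤ)),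
      ∏ i, F i (WithLp.toLp 2 (Function.update x i (x i - a i * t ^ (d i))))

/-!
The estimate is invariant under the anisotropic dilations `D x = (2^{m dᵢ} xᵢ)ᵢ`: they intertwine
the averages at different scales, `A_{-k₀}(F ∘ D) = A_{-(k₀+m)}(F) ∘ D`, a linear change of
variables multiplies `‖·‖_{L¹}` and `∏ᵢ ‖Fᵢ‖_{Lⁿ}` (a product of `n` factors) by the same Jacobian,
and the frequency condition at scale `k` becomes the one at scale `k₀`. So an estimate at any scale
`k` follows from the one at a scale `k₀ ≥ 0` with `2^{-k₀} ≤ δ`, where `2^{-c k₀} ≤ δ^c`.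
-/

open scoped RealInnerProductSpace

section LinearChangeOfVariables

variable {E : Type*} [NormedAddCommGroup E] [NormedSpace ℝ E] [MeasurableSpace E] [BorelSpace E]
  [FiniteDimensional ℝ E] (μ : Measure E) [μ.IsAddHaarMeasure] (T : E ≃L[ℝ] E)

theorem map_continuousLinearEquiv_addHaar :
    μ.map T = ENNReal.ofReal |(LinearMap.det (T : E →ₗ[ℝ] E))⁻¹| • μ :=
  Measure.map_linearMap_addHaar_eq_smul_addHaar μ (LinearEquiv.isUnit_det' T.toLinearEquiv).ne_zero

variable {G : Type*} [NormedAddCommGroup G]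

theorem eLpNorm_comp_continuousLinearEquiv (g : E → G) {p : ℝ≥0∞} (hp : p ≠ ∞) :
    eLpNorm (g ∘ T) p μ
      = ENNReal.ofReal |(LinearMap.det (T : E →ₗ[ℝ] E))⁻¹| ^ (1 / p).toReal * eLpNorm g p μ := by
  have hT : MeasurableEmbedding T := T.toHomeomorph.measurableEmbedding
  rw [← hT.eLpNorm_map_measure, map_continuousLinearEquiv_addHaar,
    eLpNorm_smul_measure_of_ne_top hp, smul_eq_mul]

theorem MeasureTheory.MemLp.comp_continuousLinearEquiv {g : E → G} {p : ℝ≥0∞} (hg : MemLp g p μ) :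
    MemLp (g ∘ T) p μ := by
  have hT : MeasurableEmbedding T := T.toHomeomorph.measurableEmbedding
  rw [← hT.memLp_map_measure_iff, map_continuousLinearEquiv_addHaar]
  exact hg.smul_measure ENNReal.ofReal_ne_top

theorem prod_eLpNorm_comp_continuousLinearEquiv {n : ℕ} (hn : n ≠ 0) (F : Fin n → E → G) :
    ∏ i, eLpNorm (F i ∘ T) n μ
      = ENNReal.ofReal |(LinearMap.det (T : E →ₗ[ℝ] E))⁻¹| * ∏ i, eLpNorm (F i) n μ := by
  simp_rw [eLpNorm_comp_continuousLinearEquiv μ T _ (ENNReal.natCast_ne_top n)]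
  rw [Finset.prod_mul_distrib, Finset.prod_const, Finset.card_univ, Fintype.card_fin,
    ← ENNReal.rpow_mul_natCast, ENNReal.toReal_div, ENNReal.toReal_natCast]
  field_simp
  simp

theorem eLpNorm_one_le_of_comp_continuousLinearEquiv {n : ℕ} (hn : n ≠ 0) {G' : Type*}
    [NormedAddCommGroup G'] {f : E → G'} (F : Fin n → E → G) {B : ℝ≥0∞}
    (h : eLpNorm (f ∘ T) 1 μ ≤ B * ∏ i, eLpNorm (F i ∘ T) n μ) :
    eLpNorm f 1 μ ≤ B * ∏ i, eLpNorm (F i) n μ := by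
  have hdet := (LinearEquiv.isUnit_det' T.toLinearEquiv).ne_zero
  rw [eLpNorm_comp_continuousLinearEquiv μ T f ENNReal.one_ne_top,
    prod_eLpNorm_comp_continuousLinearEquiv μ T hn, mul_left_comm] at h
  simp only [ENNReal.div_self one_ne_zero ENNReal.one_ne_top, ENNReal.toReal_one,
    ENNReal.rpow_one] at h
  exact (ENNReal.mul_le_mul_iff_right (by simpa using hdet) ENNReal.ofReal_ne_top).mp h

end LinearChangeOfVariables

theorem fourier_comp_symmetric_continuousLinearEquiv {V E : Type*}
    [NormedAddCommGroup V] [InnerProductSpace ℝ V] [FiniteDimensional ℝ V] [MeasurableSpace V]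
    [BorelSpace V] [NormedAddCommGroup E] [NormedSpace ℂ E] (T : V ≃L[ℝ] V)
    (hT : ∀ v w, ⟪T v, w⟫ = ⟪v, T w⟫) (f : V → E) (ξ : V) :
    𝓕 (f ∘ T) (T ξ) = |(LinearMap.det (T : V →ₗ[ℝ] V))⁻¹| • 𝓕 f ξ := by
  simp_rw [Real.fourier_eq, Function.comp_apply, ← hT]
  have hT' : MeasurableEmbedding T := T.toHomeomorph.measurableEmbedding
  rw [← hT'.integral_map (fun y => 𝐞 (-⟪y, ξ⟫) • f y),
    map_continuousLinearEquiv_addHaar, integral_smul_measure, ENNReal.toReal_ofReal (abs_nonneg _)]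

section Dilation

variable {ι : Type*} [Fintype ι]

noncomputable def diagDilation (c : ι → ℝ) (hc : ∀ i, c i ≠ 0) :
    EuclideanSpace ℝ ι ≃L[ℝ] EuclideanSpace ℝ ι :=
  LinearEquiv.toContinuousLinearEquiv
    { toFun x := WithLp.toLp 2 fun i => c i * x i
      invFun x := WithLp.toLp 2 fun i => (c i)⁻¹ * x i
      map_add' x y := by ext; simp [mul_add]
      map_smul' r x := by ext; simp [mul_left_comm]
      left_inv x := by ext; simp [hc]
      right_inv x := by ext; simp [hc] }

variable (c : ι → ℝ) (hc : ∀ i, c i ≠ 0)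

@[simp]
theorem diagDilation_apply (x : EuclideanSpace ℝ ι) (i : ι) :
    diagDilation c hc x i = c i * x i := rfl

@[simp]
theorem diagDilation_symm_apply (x : EuclideanSpace ℝ ι) (i : ι) :
    (diagDilation c hc).symm x i = (c i)⁻¹ * x i := rfl

theorem inner_diagDilation_left (v w : EuclideanSpace ℝ ι) :
    ⟪diagDilation c hc v, w⟫ = ⟪v, diagDilation c hc w⟫ := by
  simp only [PiLp.inner_apply, diagDilation_apply, RCLike.inner_apply, conj_trivial]
  exact Finset.sum_congr rfl fun i _ => by ring

end Dilation

/-- The anisotropic dilation `D_{2^m}` of the paper. -/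
noncomputable def dyadicDilation {ι : Type*} [Fintype ι] (d : ι → ℕ) (m : ℤ) :
    EuclideanSpace ℝ ι ≃L[ℝ] EuclideanSpace ℝ ι :=
  diagDilation (fun i => (2 : ℝ) ^ (m * d i)) fun _ => zpow_ne_zero _ two_ne_zero

theorem fourier_comp_dyadicDilation_eq_zero {ι E : Type*} [Fintype ι] [NormedAddCommGroup E]
    [NormedSpace ℂ E] (d : ι → ℕ) (m : ℤ) {f : EuclideanSpace ℝ ι → E} {j : ι} {R : ℝ}
    (hf : ∀ ξ : EuclideanSpace ℝ ι, |ξ j| ≤ R → 𝓕 f ξ = 0) (η : EuclideanSpace ℝ ι)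
    (hη : |η j| ≤ (2 : ℝ) ^ (m * d j) * R) : 𝓕 (f ∘ dyadicDilation d m) η = 0 := by
  rw [← (dyadicDilation d m).apply_symm_apply η,
    fourier_comp_symmetric_continuousLinearEquiv _ (inner_diagDilation_left _ _),
    hf, smul_zero]
  rw [dyadicDilation, diagDilation_symm_apply, abs_mul, abs_of_pos (by positivity),
    inv_mul_le_iff₀ (by positivity)]
  exact hη

theorem avgOpE_comp_dyadicDilation (n : ℕ) (d : Fin n → ℕ) (a : Fin n → ℝ) (k m : ℤ)
    (F : Fin n → EuclideanSpace ℝ (Fin n) → ℂ) :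
    avgOpE n d a k (fun i => F i ∘ dyadicDilation d m)
      = avgOpE n d a (k + m) F ∘ dyadicDilation d m := by
  have hshift : ∀ (x : EuclideanSpace ℝ (Fin n)) (i : Fin n) (t : ℝ),
      dyadicDilation d m (WithLp.toLp 2 (Function.update x i (x i - a i * t ^ d i)))
        = WithLp.toLp 2 (Function.update (dyadicDilation d m x) i
            (dyadicDilation d m x i - a i * ((2 : ℝ) ^ m * t) ^ d i)) := by
    intro x i t
    ext j
    rcases eq_or_ne j i with rfl | hj
    · simp only [dyadicDilation, diagDilation_apply, Function.update_self]
      rw [mul_pow, ← zpow_natCast (2 ^ m), ← zpow_mul]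
      ring
    · simp [dyadicDilation, hj]
  funext x
  simp only [avgOpE, Function.comp_apply, hshift]
  generalize dyadicDilation d m x = y
  set g : ℝ → ℂ := fun s => ∏ i, F i (WithLp.toLp 2 (Function.update y i (y i - a i * s ^ d i)))
  change (2 : ℝ) ^ (-k) • ∫ t in Set.Ioc 0 ((2 : ℝ) ^ k), g (2 ^ m * t)
    = (2 : ℝ) ^ (-(k + m)) • ∫ s in Set.Ioc 0 ((2 : ℝ) ^ (k + m)), g s
  have h2 : (2 : ℝ) ≠ 0 := two_ne_zero
  rw [← intervalIntegral.integral_of_le (by positivity),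
    ← intervalIntegral.integral_of_le (by positivity),
    intervalIntegral.integral_comp_mul_left g (zpow_ne_zero m h2), mul_zero,
    ← zpow_add₀ h2, smul_smul, ← zpow_neg, ← zpow_add₀ h2, add_comm m k, neg_add]

theorem exists_two_rpow_neg_mul_le {δ c : ℝ} (hδ : 0 < δ) (hc : 0 ≤ c) :
    ∃ k : ℕ, (2 : ℝ) ^ (-(c * k)) ≤ δ ^ c := by
  obtain ⟨k, hk⟩ := exists_pow_lt_of_lt_one hδ (by norm_num : (2 : ℝ)⁻¹ < 1)
  refine ⟨k, ?_⟩
  calc (2 : ℝ) ^ (-(c * k)) = ((2 : ℝ)⁻¹ ^ k) ^ c := by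
        rw [← Real.rpow_natCast, Real.inv_rpow zero_le_two, ← Real.rpow_neg zero_le_two,
          ← Real.rpow_mul zero_le_two, neg_mul, mul_comm]
    _ ≤ δ ^ c := Real.rpow_le_rpow (by positivity) hk.le hc

theorem avgOp_smoothing_all_scales_general (n : ℕ) (hn : 1 ≤ n) (d : Fin n → ℕ)
    (a : Fin n → ℝ)
    (c C : ℝ) (hc : 0 < c) (hC : 0 < C)
    (hyp : ∀ k : ℤ, 0 ≤ k → ∀ δ : ℝ, 0 < δ → δ < 1 →
      ∀ F : Fin n → EuclideanSpace ℝ (Fin n) → ℂ,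
        (∀ i, MemLp (F i) (n : ℝ≥0∞) volume) →
        (∃ j, ∀ ξ : EuclideanSpace ℝ (Fin n),
            |ξ j| ≤ (2 : ℝ) ^ (-(k * (d j : ℤ))) * δ⁻¹ → 𝓕 (F j) ξ = 0) →
        eLpNorm (avgOpE n d a k F) 1 volume
          ≤ ENNReal.ofReal (C * (δ ^ c + (2 : ℝ) ^ (-(c * (k : ℝ)))))
              * ∏ i, eLpNorm (F i) (n : ℝ≥0∞) volume) :
    ∃ c' > (0 : ℝ), ∃ C' > (0 : ℝ), ∀ k : ℤ, ∀ δ : ℝ, 0 < δ → δ < 1 →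
      ∀ F : Fin n → EuclideanSpace ℝ (Fin n) → ℂ,
        (∀ i, MemLp (F i) (n : ℝ≥0∞) volume) →
        (∃ j, ∀ ξ : EuclideanSpace ℝ (Fin n),
            |ξ j| ≤ (2 : ℝ) ^ (-(k * (d j : ℤ))) * δ⁻¹ → 𝓕 (F j) ξ = 0) →
        eLpNorm (avgOpE n d a k F) 1 volume
          ≤ ENNReal.ofReal (C' * δ ^ c')
              * ∏ i, eLpNorm (F i) (n : ℝ≥0∞) volume := by
  refine ⟨c, hc, 2 * C, by positivity, fun k δ hδ0 hδ1 F hF ⟨j, hj⟩ => ?_⟩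
  obtain ⟨k₀, hdecay⟩ := exists_two_rpow_neg_mul_le hδ0 hc.le
  set D := dyadicDilation d (k - k₀)
  have hrescaled := hyp k₀ k₀.cast_nonneg δ hδ0 hδ1 (fun i => F i ∘ D)
    (fun i => (hF i).comp_continuousLinearEquiv volume D)
    ⟨j, fun ξ hξ => fourier_comp_dyadicDilation_eq_zero d (k - k₀) hj ξ <| by
      rwa [← mul_assoc, ← zpow_add₀ two_ne_zero,
        show (k - k₀) * d j + -(k * d j) = -(k₀ * d j) by ring]⟩
  rw [avgOpE_comp_dyadicDilation, add_sub_cancel] at hrescaled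
  refine (eLpNorm_one_le_of_comp_continuousLinearEquiv volume D (by omega) F hrescaled).trans ?_
  gcongr ENNReal.ofReal ?_ * _
  rw [Int.cast_natCast]
  nlinarith [Real.rpow_nonneg hδ0.le c]

/-- Rescaling step removing the `k`-dependence in the Kosz–Mirek–Peluse–Wright estimate:
if the smoothing bound `‖A_{-k}(F)‖_{L¹} ≤ C(δ^c + 2^{-kc}) ∏ ‖Fᵢ‖_{Lⁿ}` holds for all
`k ≥ 0` whenever some `F̂ⱼ` vanishes on `{|ξⱼ| ≤ 2^{-kdⱼ} δ⁻¹}`, then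
`‖A_{-k}(F)‖_{L¹} ≤ C' δ^{c'} ∏ ‖Fᵢ‖_{Lⁿ}` holds for ALL `k ∈ ℤ` under the same
frequency hypothesis. -/
theorem avgOp_smoothing_all_scales (n : ℕ) (hn : 1 ≤ n) (d : Fin n → ℕ) (hd : StrictMono d)
    (hdpos : ∀ i, 0 < d i) (a : Fin n → ℝ) (ha : ∀ i, a i ≠ 0)
    (c C : ℝ) (hc : 0 < c) (hC : 0 < C)
    (hyp : ∀ k : ℤ, 0 ≤ k → ∀ δ : ℝ, 0 < δ → δ < 1 →
      ∀ F : Fin n → EuclideanSpace ℝ (Fin n) → ℂ,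
        (∀ i, MemLp (F i) (n : ℝ≥0∞) volume) →
        (∃ j, ∀ ξ : EuclideanSpace ℝ (Fin n),
            |ξ j| ≤ (2 : ℝ) ^ (-(k * (d j : ℤ))) * δ⁻¹ → 𝓕 (F j) ξ = 0) →
        eLpNorm (avgOpE n d a k F) 1 volume
          ≤ ENNReal.ofReal (C * (δ ^ c + (2 : ℝ) ^ (-(c * (k : ℝ)))))
              * ∏ i, eLpNorm (F i) (n : ℝ≥0∞) volume) :
    ∃ c' > (0 : ℝ), ∃ C' > (0 : ℝ), ∀ k : ℤ, ∀ δ : ℝ, 0 < δ → δ < 1 →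
      ∀ F : Fin n → EuclideanSpace ℝ (Fin n) → ℂ,
        (∀ i, MemLp (F i) (n : ℝ≥0∞) volume) →
        (∃ j, ∀ ξ : EuclideanSpace ℝ (Fin n),
            |ξ j| ≤ (2 : ℝ) ^ (-(k * (d j : ℤ))) * δ⁻¹ → 𝓕 (F j) ξ = 0) →
        eLpNorm (avgOpE n d a k F) 1 volume
          ≤ ENNReal.ofReal (C' * δ ^ c')
              * ∏ i, eLpNorm (F i) (n : ℝ≥0∞) volume :=
  avgOp_smoothing_all_scales_general n hn d a c C hc hC hyp
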